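/- For a reduction order ≻ on first-order terms (well-founded, transitive, closed under contexts and substitutions), the composition ⊳ ∘ ≻ is contained in ≻ ∘ ⊳ ∪ ≻; more precisely, if s ⊳ s' and s' ≻ t then s ≻_ctx-extended t in the sense that there exists a term u with s ≻ u and u ⊵ t, where ⊵ is the (reflexive) subterm relation. (This is the key commutation lemma used to show well-foundedness of (≻ ∪ ⊳)⁺.) -/
import Mathlib


/-- First-order terms over signature `F` with variables `V`. -/
inductive Term (F V : Type) : Type where
  | var : V → Term F V
  | app : F → List (Term F V) → Term F V

namespace Term

variable {F V : Type}

mutual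
/-- Application of a substitution to a term. -/
def subst (σ : V → Term F V) : Term F V → Term F V
  | .var x => σ x
  | .app f ts => .app f (substList σ ts)

/-- Application of a substitution to a list of terms. -/
def substList (σ : V → Term F V) : List (Term F V) → List (Term F V)
  | [] => []
  | t :: ts => t.subst σ :: substList σ ts
end

/-- `t.HasVar x` means the variable `x` occurs in `t`. -/
inductive HasVar : Term F V → V → Prop where
  | var : ∀ x, HasVar (.var x) x
  | app : ∀ {f ts t x}, t ∈ ts → HasVar t x → HasVar (.app f ts) x

/-- `DirectSubterm t s`: `t` is an immediate subterm (argument) of `s`. -/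
def DirectSubterm (t s : Term F V) : Prop :=
  ∃ f ts, s = Term.app f ts ∧ t ∈ ts

/-- `ProperSubterm t s`: `t` is a proper subterm of `s` (so `s ⊳ t`). -/
def ProperSubterm : Term F V → Term F V → Prop :=
  Relation.TransGen DirectSubterm

/-- Reflexive subterm relation: `Subterm t s` iff `s ⊵ t`. -/
def Subterm : Term F V → Term F V → Prop :=
  Relation.ReflTransGen DirectSubterm

/-- Subterm of `t` at position `p`, if any. -/
def subtermAt : Term F V → List ℕ → Option (Term F V)
  | t, [] => some t
  | .var _, _ :: _ => none
  | .app _ ts, i :: p =>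
    match ts[i]? with
    | some t => t.subtermAt p
    | none => none

/-- Replace the subterm at position `p` by `u`, if the position exists. -/
def replaceAt : Term F V → List ℕ → Term F V → Option (Term F V)
  | _, [], u => some u
  | .var _, _ :: _, _ => none
  | .app f ts, i :: p, u =>
    match ts[i]? with
    | some t => (t.replaceAt p u).map (fun t' => Term.app f (ts.set i t'))
    | none => none

end Term

/-- A rewrite relation is closed under contexts if it is closed under
placing both sides in the same argument position of a function application. -/
def ClosedUnderCtx {F V : Type} (r : Term F V → Term F V → Prop) : Prop :=
  ∀ (f : F) (ts₁ ts₂ : List (Term F V)) (s t : Term F V),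
    r s t → r (Term.app f (ts₁ ++ s :: ts₂)) (Term.app f (ts₁ ++ t :: ts₂))

/-- Closure under substitutions. -/
def ClosedUnderSubst {F V : Type} (r : Term F V → Term F V → Prop) : Prop :=
  ∀ (s t : Term F V) (σ : V → Term F V), r s t → r (s.subst σ) (t.subst σ)

/-- `a` is a normal form of `r` if it has no `r`-successor. -/
def NormalForm {A : Type} (r : A → A → Prop) (a : A) : Prop :=
  ∀ b, ¬ r a b

/-- A substitution is normalized if it maps every variable to a normal form. -/
def NormalizedSubst {F V : Type} (r : Term F V → Term F V → Prop)
    (σ : V → Term F V) : Prop :=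
  ∀ x, NormalForm r (σ x)

/-- A term is strongly irreducible w.r.t. `r` if all its instances by
normalized substitutions are normal forms. -/
def StronglyIrreducible {F V : Type} (r : Term F V → Term F V → Prop)
    (t : Term F V) : Prop :=
  ∀ σ, NormalizedSubst r σ → NormalForm r (t.subst σ)

/-- Joinability. -/
def Joinable {A : Type} (r : A → A → Prop) (t u : A) : Prop :=
  ∃ v, Relation.ReflTransGen r t v ∧ Relation.ReflTransGen r u v

/-- Confluence. -/
def Confluent {A : Type} (r : A → A → Prop) : Prop :=
  ∀ s t u, Relation.ReflTransGen r s t → Relation.ReflTransGen r s u →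
    Joinable r t u

theorem step_aux {F V : Type} {succ : Term F V → Term F V → Prop}
    (hctx : ClosedUnderCtx succ) {s' s t : Term F V}
    (h : Term.DirectSubterm s' s) (hst : succ s' t) :
    ∃ u, succ s u ∧ Term.DirectSubterm t u := by
  obtain ⟨f, ts, rfl, hmem⟩ := h
  obtain ⟨l₁, l₂, rfl⟩ := List.append_of_mem hmem
  exact ⟨Term.app f (l₁ ++ t :: l₂), hctx f l₁ l₂ s' t hst,
    f, l₁ ++ t :: l₂, rfl, by simp⟩

/-- Commutation lemma: if `s ⊳ s'` and `s' ≻ t`, then there is a term `u`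
with `s ≻ u` and `u ⊵ t`. -/
theorem subterm_comp_succ {F V : Type}
    (succ : Term F V → Term F V → Prop)
    (hwf : WellFounded (fun t s => succ s t))
    (htrans : Transitive succ)
    (hirr : Irreflexive succ)
    (hctx : ClosedUnderCtx succ)
    (hsubst : ClosedUnderSubst succ)
    (s s' t : Term F V)
    (hsub : Term.ProperSubterm s' s)
    (hst : succ s' t) :
    ∃ u, succ s u ∧ Term.Subterm t u := by
  induction hsub with
  | single h =>
    obtain ⟨u, hsu, hdu⟩ := step_aux hctx h hst
    exact ⟨u, hsu, Relation.ReflTransGen.single hdu⟩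
  | tail _ hbs ih =>
    obtain ⟨u, hbu, htu⟩ := ih
    obtain ⟨v, hsv, hdv⟩ := step_aux hctx hbs hbu
    exact ⟨v, hsv, htu.tail hdv⟩
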